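/- arXiv:1703.02336 — 2 statements merged into one kernel-verified Lean document; each statement's English description precedes it below -/
import Mathlib

section
/- Norm bound from LMIs: if β > 0, ζ > 0, the matrices [[−βI, Gᵀ],[G, −I]] < 0 and [[Y, I],[I, ζI]] > 0 hold (Y symmetric), then ‖K‖₂ ≤ √β · ζ where K = G Y⁻¹. -/
open Matrix

private lemma dotself_nonneg {n : ℕ} (v : Fin n → ℝ) : 0 ≤ v ⬝ᵥ v :=
  Finset.sum_nonneg fun i _ => mul_self_nonneg _

/-- Norm bound from LMIs: if `[[-βI, Gᵀ],[G, -I]] < 0` and `[[Y, I],[I, ζI]] > 0`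
then the spectral norm of `K = G Y⁻¹` is at most `√β · ζ` (stated as the
Euclidean operator-norm bound `‖Kx‖₂ ≤ √β ζ ‖x‖₂`). -/
theorem norm_bound_from_LMIs (m n : ℕ)
    (G : Matrix (Fin m) (Fin n) ℝ) (Y : Matrix (Fin n) (Fin n) ℝ)
    (β ζ : ℝ) (hβ : 0 < β) (hζ : 0 < ζ) (hYsymm : Y.IsSymm)
    (h1 : ∀ x : Fin n ⊕ Fin m → ℝ, x ≠ 0 →
        x ⬝ᵥ (Matrix.fromBlocks (-(β • (1 : Matrix (Fin n) (Fin n) ℝ))) Gᵀ G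
          (-(1 : Matrix (Fin m) (Fin m) ℝ))) *ᵥ x < 0)
    (h2 : (Matrix.fromBlocks Y (1 : Matrix (Fin n) (Fin n) ℝ)
        (1 : Matrix (Fin n) (Fin n) ℝ) (ζ • (1 : Matrix (Fin n) (Fin n) ℝ))).PosDef)
    (K : Matrix (Fin m) (Fin n) ℝ) (hK : K = G * Y⁻¹) :
    ∀ x : Fin n → ℝ,
      Real.sqrt ((K *ᵥ x) ⬝ᵥ (K *ᵥ x)) ≤ Real.sqrt β * ζ * Real.sqrt (x ⬝ᵥ x) := by
  -- Step A : ‖G v‖² ≤ β ‖v‖²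
  have stepA : ∀ v : Fin n → ℝ, (G *ᵥ v) ⬝ᵥ (G *ᵥ v) ≤ β * (v ⬝ᵥ v) := by
    intro v
    by_cases hv : v = 0
    · simp [hv]
    · have hx : (Sum.elim v (G *ᵥ v) : Fin n ⊕ Fin m → ℝ) ≠ 0 := by
        intro h
        apply hv
        funext i
        have := congrFun h (Sum.inl i)
        simpa using this
      have := h1 (Sum.elim v (G *ᵥ v)) hx
      rw [fromBlocks_mulVec] at this
      simp only [neg_mulVec, smul_mulVec, one_mulVec,
        sumElim_dotProduct_sumElim, dotProduct_add, dotProduct_neg,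
        dotProduct_smul, smul_eq_mul, Sum.elim_comp_inl, Sum.elim_comp_inr] at this
      have hGT : v ⬝ᵥ (Gᵀ *ᵥ (G *ᵥ v)) = (G *ᵥ v) ⬝ᵥ (G *ᵥ v) := by
        rw [dotProduct_mulVec, vecMul_transpose]
      rw [hGT] at this
      nlinarith [this]
  -- Step B : u ⬝ Y u ≥ ζ⁻¹ ‖u‖²
  have stepB : ∀ u : Fin n → ℝ, ζ⁻¹ * (u ⬝ᵥ u) ≤ u ⬝ᵥ (Y *ᵥ u) := by
    intro u
    by_cases hu : u = 0
    · simp [hu]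
    · have hx : (Sum.elim u (-(ζ⁻¹ • u)) : Fin n ⊕ Fin n → ℝ) ≠ 0 := by
        intro h
        apply hu
        funext i
        have := congrFun h (Sum.inl i)
        simpa using this
      have := (posDef_iff_dotProduct_mulVec.mp h2).2 (x := Sum.elim u (-(ζ⁻¹ • u))) hx
      rw [fromBlocks_mulVec] at this
      simp only [one_mulVec, mulVec_neg, smul_mulVec,
        sumElim_dotProduct_sumElim, dotProduct_add, dotProduct_neg,
        dotProduct_smul, smul_eq_mul, RCLike.star_def, star_trivial,
        neg_dotProduct, smul_dotProduct, mulVec_smul,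
        Sum.elim_comp_inl, Sum.elim_comp_inr] at this
      have hzz : ζ * (ζ⁻¹ * (ζ⁻¹ * (u ⬝ᵥ u))) = ζ⁻¹ * (u ⬝ᵥ u) := by
        field_simp
      have hzi : ζ * ζ⁻¹ = 1 := mul_inv_cancel₀ hζ.ne'
      nlinarith [this, dotself_nonneg u, hzi]
  -- Y is positive definite hence invertible
  have hYpd : Y.PosDef := by
    refine PosDef.of_dotProduct_mulVec_pos hYsymm (fun u hu => ?_)
    have h := stepB u
    have hu2 : 0 < u ⬝ᵥ u := by
      rcases lt_or_eq_of_le (dotself_nonneg u) with h' | h'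
      · exact h'
      · exfalso; apply hu; funext i
        have : ∀ j, u j * u j = 0 := by
          intro j
          by_contra hj
          have : 0 < u ⬝ᵥ u := by
            apply Finset.sum_pos' (fun k _ => mul_self_nonneg _)
            exact ⟨j, Finset.mem_univ j, lt_of_le_of_ne (mul_self_nonneg _) (Ne.symm hj)⟩
          linarith
        have := this i
        exact (mul_self_eq_zero).mp this
    have : 0 < ζ⁻¹ * (u ⬝ᵥ u) := mul_pos (inv_pos.mpr hζ) hu2
    simpa using lt_of_lt_of_le this h
  have hdet : IsUnit Y.det := isUnit_iff_ne_zero.mpr hYpd.det_pos.ne'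
  intro x
  set v : Fin n → ℝ := Y⁻¹ *ᵥ x with hv
  have hYv : Y *ᵥ v = x := by
    rw [hv, mulVec_mulVec, mul_nonsing_inv Y hdet, one_mulVec]
  -- Step C : ‖v‖² ≤ ζ² ‖x‖²
  have hCS : (v ⬝ᵥ x) ^ 2 ≤ (v ⬝ᵥ v) * (x ⬝ᵥ x) := by
    simpa [dotProduct, pow_two] using
      Finset.sum_mul_sq_le_sq_mul_sq Finset.univ v x
  have hB := stepB v
  rw [hYv] at hB
  have stepC : v ⬝ᵥ v ≤ ζ ^ 2 * (x ⬝ᵥ x) := by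
    by_cases hvv : v ⬝ᵥ v = 0
    · rw [hvv]
      exact mul_nonneg (sq_nonneg ζ) (dotself_nonneg x)
    · have hvv' : 0 < v ⬝ᵥ v := lt_of_le_of_ne (dotself_nonneg v) (Ne.symm hvv)
      have h0 : 0 ≤ ζ⁻¹ * (v ⬝ᵥ v) := mul_nonneg (inv_nonneg.mpr hζ.le) (dotself_nonneg v)
      have h3 : (ζ⁻¹ * (v ⬝ᵥ v)) ^ 2 ≤ (v ⬝ᵥ v) * (x ⬝ᵥ x) :=
        le_trans (pow_le_pow_left₀ h0 hB 2) hCS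
      have h4 : ζ⁻¹ ^ 2 * (v ⬝ᵥ v) ≤ x ⬝ᵥ x := by
        have h3' : (ζ⁻¹ ^ 2 * (v ⬝ᵥ v)) * (v ⬝ᵥ v) ≤ (x ⬝ᵥ x) * (v ⬝ᵥ v) := by
          nlinarith [h3]
        exact (mul_le_mul_iff_of_pos_right hvv').mp h3'
      calc v ⬝ᵥ v = ζ ^ 2 * (ζ⁻¹ ^ 2 * (v ⬝ᵥ v)) := by
            field_simp
        _ ≤ ζ ^ 2 * (x ⬝ᵥ x) := mul_le_mul_of_nonneg_left h4 (sq_nonneg ζ)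
  -- assemble
  have hKx : K *ᵥ x = G *ᵥ v := by
    rw [hK, ← mulVec_mulVec]
  rw [hKx]
  calc Real.sqrt ((G *ᵥ v) ⬝ᵥ (G *ᵥ v)) ≤ Real.sqrt (β * (v ⬝ᵥ v)) :=
        Real.sqrt_le_sqrt (stepA v)
    _ ≤ Real.sqrt (β * (ζ ^ 2 * (x ⬝ᵥ x))) := by
        apply Real.sqrt_le_sqrt
        exact mul_le_mul_of_nonneg_left stepC hβ.le
    _ = Real.sqrt β * ζ * Real.sqrt (x ⬝ᵥ x) := by
        rw [Real.sqrt_mul hβ.le, Real.sqrt_mul (by positivity)]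
        rw [Real.sqrt_sq hζ.le]
        ring
end

section
/- (LaSalle for linear systems) Consider ẋ = Fx with symmetric P > 0 and Q = FᵀP + PF ≤ 0. If the largest F-invariant subspace contained in Ker(Q) is {0}, then F is Hurwitz, i.e., the origin of ẋ = Fx is asymptotically stable. -/
open Matrix

/-- LaSalle invariance for linear systems: if `P > 0`, `Q = FᵀP + PF ≤ 0`, and
the only `F`-invariant subspace contained in `Ker Q` is `{0}`, then `F` is
Hurwitz (all eigenvalues have negative real part, i.e. the origin of
`ẋ = Fx` is asymptotically stable). -/
theorem lasalle_linear_hurwitz (n : ℕ) (F P : Matrix (Fin n) (Fin n) ℝ)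
    (hPsymm : P.IsSymm) (hP : P.PosDef)
    (Q : Matrix (Fin n) (Fin n) ℝ) (hQ : Q = Fᵀ * P + P * F)
    (hnsd : ∀ x : Fin n → ℝ, x ⬝ᵥ Q *ᵥ x ≤ 0)
    (hinv : ∀ V : Submodule ℝ (Fin n → ℝ),
        (∀ v ∈ V, F *ᵥ v ∈ V) → (∀ v ∈ V, Q *ᵥ v = 0) → V = ⊥) :
    ∀ μ : ℂ, μ ∈ spectrum ℂ (F.map (Complex.ofReal)) → μ.re < 0 := by
  intro μ hμ
  rw [spectrum.mem_iff] at hμ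
  -- extract an eigenvector
  have hdet : (algebraMap ℂ (Matrix (Fin n) (Fin n) ℂ) μ - F.map Complex.ofReal).det = 0 := by
    by_contra h
    exact hμ ((Matrix.isUnit_iff_isUnit_det _).mpr (isUnit_iff_ne_zero.mpr h))
  obtain ⟨v, hv0, hv⟩ := (Matrix.exists_mulVec_eq_zero_iff).mpr hdet
  have hAv : (F.map Complex.ofReal) *ᵥ v = μ • v := by
    have h1 : (algebraMap ℂ (Matrix (Fin n) (Fin n) ℂ) μ) = μ • (1 : Matrix (Fin n) (Fin n) ℂ) :=
      Algebra.algebraMap_eq_smul_one μ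
    rw [h1, Matrix.sub_mulVec, Matrix.smul_mulVec, Matrix.one_mulVec, sub_eq_zero] at hv
    exact hv.symm
  set a : Fin n → ℝ := fun i => (v i).re with ha_def
  set b : Fin n → ℝ := fun i => (v i).im with hb_def
  set σ : ℝ := μ.re
  set ω : ℝ := μ.im
  have hre : ∀ i, (F *ᵥ a) i = σ * a i - ω * b i := by
    intro i
    have h1 := congrFun hAv i
    have h2 : ((F.map Complex.ofReal *ᵥ v) i).re = (F *ᵥ a) i := by
      simp [Matrix.mulVec, dotProduct, Matrix.map_apply, Complex.re_sum, ha_def]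
    have h3 : ((μ • v) i).re = σ * a i - ω * b i := by
      simp [Complex.mul_re, ha_def, hb_def, σ, ω]
    rw [← h2, h1, h3]
  have him : ∀ i, (F *ᵥ b) i = ω * a i + σ * b i := by
    intro i
    have h1 := congrFun hAv i
    have h2 : ((F.map Complex.ofReal *ᵥ v) i).im = (F *ᵥ b) i := by
      simp [Matrix.mulVec, dotProduct, Matrix.map_apply, Complex.im_sum, hb_def]
    have h3 : ((μ • v) i).im = ω * a i + σ * b i := by
      simp [Complex.mul_im, ha_def, hb_def, σ, ω]; ring
    rw [← h2, h1, h3]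
  have hFa : F *ᵥ a = σ • a - ω • b := funext fun i => by
    simpa [Pi.sub_apply, Pi.smul_apply, smul_eq_mul] using hre i
  have hFb : F *ᵥ b = ω • a + σ • b := funext fun i => by
    simpa [Pi.add_apply, Pi.smul_apply, smul_eq_mul] using him i
  -- symmetry of the P-bilinear form
  have hPsym : ∀ u w : Fin n → ℝ, u ⬝ᵥ P *ᵥ w = w ⬝ᵥ P *ᵥ u := by
    intro u w
    rw [Matrix.dotProduct_mulVec, ← Matrix.mulVec_transpose, hPsymm.eq, dotProduct_comm]
  -- Q-quadratic form identity
  have hQform : ∀ x : Fin n → ℝ, x ⬝ᵥ Q *ᵥ x = 2 * (x ⬝ᵥ P *ᵥ (F *ᵥ x)) := by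
    intro x
    have h1 : x ⬝ᵥ (Fᵀ * P) *ᵥ x = (F *ᵥ x) ⬝ᵥ P *ᵥ x := by
      rw [← Matrix.mulVec_mulVec, Matrix.dotProduct_mulVec, Matrix.vecMul_transpose]
    have h2 : x ⬝ᵥ (P * F) *ᵥ x = x ⬝ᵥ P *ᵥ (F *ᵥ x) := by
      rw [← Matrix.mulVec_mulVec]
    rw [hQ, Matrix.add_mulVec, dotProduct_add, h1, h2, hPsym (F *ᵥ x) x]
    ring
  have hQa : a ⬝ᵥ Q *ᵥ a = 2 * (σ * (a ⬝ᵥ P *ᵥ a) - ω * (a ⬝ᵥ P *ᵥ b)) := by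
    rw [hQform, hFa]
    simp only [Matrix.mulVec_sub, Matrix.mulVec_smul, dotProduct_sub,
      dotProduct_smul, smul_eq_mul]
  have hQb : b ⬝ᵥ Q *ᵥ b = 2 * (ω * (b ⬝ᵥ P *ᵥ a) + σ * (b ⬝ᵥ P *ᵥ b)) := by
    rw [hQform, hFb]
    simp only [Matrix.mulVec_add, Matrix.mulVec_smul, dotProduct_add,
      dotProduct_smul, smul_eq_mul]
  have hab : a ⬝ᵥ P *ᵥ b = b ⬝ᵥ P *ᵥ a := hPsym a b
  have hsum : a ⬝ᵥ Q *ᵥ a + b ⬝ᵥ Q *ᵥ b = 2 * σ * (a ⬝ᵥ P *ᵥ a + b ⬝ᵥ P *ᵥ b) := by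
    rw [hQa, hQb, hab]; ring
  -- a and b are not both zero
  have hvab : ¬ (a = 0 ∧ b = 0) := by
    rintro ⟨ha0, hb0⟩
    apply hv0
    funext i
    have h1 : a i = 0 := congrFun ha0 i
    have h2 : b i = 0 := congrFun hb0 i
    exact Complex.ext h1 h2
  have hPpos : 0 < a ⬝ᵥ P *ᵥ a + b ⬝ᵥ P *ᵥ b := by
    have hnn : ∀ x : Fin n → ℝ, 0 ≤ x ⬝ᵥ P *ᵥ x := fun x => by
      simpa using hP.posSemidef.dotProduct_mulVec_nonneg x
    rcases not_and_or.mp hvab with h | h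
    · have := hP.dotProduct_mulVec_pos h
      have h2 := hnn b
      simp only [star_trivial] at this
      linarith
    · have := hP.dotProduct_mulVec_pos h
      have h2 := hnn a
      simp only [star_trivial] at this
      linarith
  -- σ ≤ 0
  have hσle : σ ≤ 0 := by
    have h1 := hnsd a
    have h2 := hnsd b
    nlinarith [hsum, hPpos]
  -- suppose σ = 0 for contradiction
  by_contra hcon
  push_neg at hcon
  have hσ0 : σ = 0 := le_antisymm hσle hcon
  have hQa0 : a ⬝ᵥ Q *ᵥ a = 0 ∧ b ⬝ᵥ Q *ᵥ b = 0 := by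
    have h1 := hnsd a
    have h2 := hnsd b
    constructor <;> nlinarith [hsum, hσ0]
  -- Q is symmetric hence -Q is PosSemidef
  have hQsymm : Q.IsSymm := by
    show Qᵀ = Q
    rw [hQ, Matrix.transpose_add, Matrix.transpose_mul, Matrix.transpose_mul,
      Matrix.transpose_transpose, hPsymm.eq]
    exact add_comm _ _
  have hnegQ : (-Q).PosSemidef := by
    apply Matrix.PosSemidef.of_dotProduct_mulVec_nonneg
    · show (-Q)ᴴ = -Q
      have hH : Qᴴ = Q := by
        ext i j
        simp only [Matrix.conjTranspose_apply, star_trivial]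
        exact hQsymm.apply i j
      rw [Matrix.conjTranspose_neg, hH]
    · intro x
      have := hnsd x
      simp only [star_trivial, Matrix.neg_mulVec, dotProduct_neg]
      linarith
  have hQva : Q *ᵥ a = 0 := by
    have h := (hnegQ.dotProduct_mulVec_zero_iff a).mp (by
      simp only [star_trivial, Matrix.neg_mulVec, dotProduct_neg, hQa0.1, neg_zero])
    rw [Matrix.neg_mulVec, neg_eq_zero] at h
    exact h
  have hQvb : Q *ᵥ b = 0 := by
    have h := (hnegQ.dotProduct_mulVec_zero_iff b).mp (by
      simp only [star_trivial, Matrix.neg_mulVec, dotProduct_neg, hQa0.2, neg_zero])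
    rw [Matrix.neg_mulVec, neg_eq_zero] at h
    exact h
  -- the span of a and b is F-invariant and contained in ker Q
  set V : Submodule ℝ (Fin n → ℝ) := Submodule.span ℝ {a, b} with hV
  have haV : a ∈ V := Submodule.subset_span (by simp)
  have hbV : b ∈ V := Submodule.subset_span (by simp)
  have hFa' : F *ᵥ a = -(ω • b) := by rw [hFa, hσ0]; simp
  have hFb' : F *ᵥ b = ω • a := by rw [hFb, hσ0]; simp
  have hFV : ∀ x ∈ V, F *ᵥ x ∈ V := by
    intro x hx
    induction hx using Submodule.span_induction with
    | mem y hy =>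
      rcases hy with h | h
      · subst h; rw [hFa']; exact neg_mem (Submodule.smul_mem _ _ hbV)
      · simp only [Set.mem_singleton_iff] at h
        subst h; rw [hFb']; exact Submodule.smul_mem _ _ haV
    | zero => rw [Matrix.mulVec_zero]; exact Submodule.zero_mem _
    | add y z _ _ hy hz => rw [Matrix.mulVec_add]; exact Submodule.add_mem _ hy hz
    | smul c y _ hy => rw [Matrix.mulVec_smul]; exact Submodule.smul_mem _ _ hy
  have hQV : ∀ x ∈ V, Q *ᵥ x = 0 := by
    intro x hx
    induction hx using Submodule.span_induction with
    | mem y hy =>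
      rcases hy with h | h
      · subst h; exact hQva
      · simp only [Set.mem_singleton_iff] at h; subst h; exact hQvb
    | zero => simp [Matrix.mulVec_zero]
    | add y z _ _ hy hz => rw [Matrix.mulVec_add, hy, hz, add_zero]
    | smul c y _ hy => rw [Matrix.mulVec_smul, hy, smul_zero]
  have hVbot : V = ⊥ := hinv V hFV hQV
  apply hvab
  constructor
  · have := hVbot ▸ haV
    simpa using this
  · have := hVbot ▸ hbV
    simpa using this
end
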